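/- arXiv:1905.08891 — 7 statements merged into one kernel-verified Lean document; each statement's English description precedes it below -/
import Mathlib

section
/- Let p and n be even positive integers with n >= 2p, and let N be an even positive divisor of p. Then there exists an even natural number k with 0 <= k <= p-2 such that gcd(p, n-p+k) = N. -/
/-!
Take the least `k` with `n - p + k ≡ N [MOD p]`; then `gcd(p, n - p + k) = gcd(p, N) = N`.
Since `2 ∣ p`, the congruence also holds modulo `2`, so `k` is even because `n - p` and `N` are.
-/

theorem Nat.exists_lt_add_modEq {p : ℕ} (hp : 0 < p) (m N : ℕ) :
    ∃ k < p, m + k ≡ N [MOD p] := by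
  have : NeZero p := ⟨hp.ne'⟩
  refine ⟨((N : ZMod p) - m).val, ZMod.val_lt _, ?_⟩
  rw [← ZMod.natCast_eq_natCast_iff]
  push_cast [ZMod.natCast_zmod_val]
  ring

theorem Nat.even_of_add_modEq {p m k N : ℕ} (hp : 2 ∣ p) (hm : Even m) (hN : Even N)
    (h : m + k ≡ N [MOD p]) : Even k := by
  have h2 : (m + k) % 2 = N % 2 := h.of_dvd hp
  rw [Nat.even_iff] at hm hN ⊢
  omega

theorem Nat.gcd_eq_of_modEq {p a N : ℕ} (hN : N ∣ p) (h : a ≡ N [MOD p]) :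
    Nat.gcd p a = N := by
  rw [Nat.gcd_comm, h.gcd_eq, Nat.gcd_comm, Nat.gcd_eq_right hN]

theorem exists_even_k_gcd_eq_general (p n N : ℕ) (hp : 0 < p) (hpe : Even p)
    (hne : Even n)
    (hNe : Even N) (hNd : N ∣ p) :
    ∃ k : ℕ, Even k ∧ k ≤ p - 2 ∧ Nat.gcd p (n - p + k) = N := by
  obtain ⟨k, hkp, hk⟩ := Nat.exists_lt_add_modEq hp (n - p) N
  have hke : Even k := Nat.even_of_add_modEq hpe.two_dvd (hne.tsub hpe) hNe hk
  refine ⟨k, hke, ?_, Nat.gcd_eq_of_modEq hNd hk⟩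
  obtain ⟨a, rfl⟩ := hke
  obtain ⟨b, rfl⟩ := hpe
  omega

/-- Let `p` and `n` be even positive integers with `n ≥ 2p`, and let `N` be an even
positive divisor of `p`.  Then there is an even `k` with `0 ≤ k ≤ p - 2` such that
`gcd(p, n - p + k) = N`. -/
theorem exists_even_k_gcd_eq (p n N : ℕ) (hp : 0 < p) (hpe : Even p)
    (hn : 0 < n) (hne : Even n) (hnp : 2 * p ≤ n)
    (hN : 0 < N) (hNe : Even N) (hNd : N ∣ p) :
    ∃ k : ℕ, Even k ∧ k ≤ p - 2 ∧ Nat.gcd p (n - p + k) = N :=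
  exists_even_k_gcd_eq_general p n N hp hpe hne hNe hNd
end

section
/- Let n be an odd integer with n > 3 such that n-1 is divisible by 4, and let d be a positive divisor of n-1 with d congruent to 2 modulo 4. Then there exists an even integer k with n-3 < 2k and k <= n-2 such that gcd(n-1, 2k+2) = d. -/
theorem exists_even_k_gcd_eq_of_four_dvd_general (n d : ℕ) (hn3 : 3 < n)
    (h4 : 4 ∣ n - 1) (hdd : d ∣ n - 1) (hd4 : d % 4 = 2) :
    ∃ k : ℕ, Even k ∧ n - 3 < 2 * k ∧ k ≤ n - 2 ∧ Nat.gcd (n - 1) (2 * k + 2) = d := by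
  have hd_le : d ≤ n - 1 := Nat.le_of_dvd (by omega) hdd
  -- `k` is chosen so that `2 * k + 2 = (n - 1) + d`; as `n - 1 + d ≡ 2 (mod 4)`, `k` is even.
  refine ⟨(n - 1 + d) / 2 - 1, Nat.even_iff.mpr (by omega), by omega, by omega, ?_⟩
  have hk : 2 * ((n - 1 + d) / 2 - 1) + 2 = n - 1 + d := by omega
  rw [hk, Nat.gcd_self_add_right, Nat.gcd_eq_right hdd]

/-- Let `n` be an odd integer with `n > 3` such that `4 ∣ n - 1`, and let `d` be a
positive divisor of `n - 1` with `d ≡ 2 (mod 4)`.  Then there exists an even `k` with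
`n - 3 < 2k` and `k ≤ n - 2` such that `gcd(n - 1, 2k + 2) = d`. -/
theorem exists_even_k_gcd_eq_of_four_dvd (n d : ℕ) (hn3 : 3 < n) (hno : Odd n)
    (h4 : 4 ∣ n - 1) (hd : 0 < d) (hdd : d ∣ n - 1) (hd4 : d % 4 = 2) :
    ∃ k : ℕ, Even k ∧ n - 3 < 2 * k ∧ k ≤ n - 2 ∧ Nat.gcd (n - 1) (2 * k + 2) = d :=
  exists_even_k_gcd_eq_of_four_dvd_general n d hn3 h4 hdd hd4
end

section
/- Let n be an odd integer with n > 3 such that n-1 is congruent to 2 modulo 4, and let d be an even positive divisor of n-1 with d < n-1. Then there exists an even integer k with n-3 < 2k and k <= n-2 such that gcd(n-1, 2k+2) = d. -/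
/-! With `d = 2e`, the condition `n - 1 ≡ 2 (mod 4)` forces `e` to be odd, so `k = n - 2 - e` is
even, and `2k + 2 = 2(n - 1) - d`. Since `d ∣ n - 1`, this gives `gcd(n - 1, 2k + 2) = gcd(n - 1, d) = d`. -/

theorem Nat.gcd_two_mul_sub_right {m n : ℕ} (h : n ≤ m) : Nat.gcd m (2 * m - n) = Nat.gcd m n := by
  rw [show 2 * m - n = m + (m - n) by omega, Nat.gcd_self_add_right, Nat.gcd_self_sub_right h]

theorem exists_even_k_gcd_eq_of_two_mod_four_general (n d : ℕ)
    (h2 : (n - 1) % 4 = 2) (hde : Even d) (hdd : d ∣ n - 1)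
    (hdlt : d < n - 1) :
    ∃ k : ℕ, Even k ∧ n - 3 < 2 * k ∧ k ≤ n - 2 ∧ Nat.gcd (n - 1) (2 * k + 2) = d := by
  obtain ⟨e, rfl⟩ := hde
  have he : Odd e := by
    by_contra hne
    obtain ⟨f, rfl⟩ := Nat.not_odd_iff_even.mp hne
    have h4 : 4 ∣ n - 1 := (Dvd.intro f (by ring)).trans hdd
    omega
  obtain ⟨f, rfl⟩ := he
  refine ⟨n - 2 - (2 * f + 1), ⟨n / 2 - f - 1, by omega⟩, by omega, by omega, ?_⟩
  rw [show 2 * (n - 2 - (2 * f + 1)) + 2 = 2 * (n - 1) - (2 * f + 1 + (2 * f + 1)) by omega,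
    Nat.gcd_two_mul_sub_right hdlt.le, Nat.gcd_eq_right hdd]

/-- Let `n` be an odd integer with `n > 3` such that `n - 1 ≡ 2 (mod 4)`, and let `d`
be an even positive divisor of `n - 1` with `d < n - 1`.  Then there exists an even `k`
with `n - 3 < 2k` and `k ≤ n - 2` such that `gcd(n - 1, 2k + 2) = d`. -/
theorem exists_even_k_gcd_eq_of_two_mod_four (n d : ℕ) (hn3 : 3 < n) (hno : Odd n)
    (h2 : (n - 1) % 4 = 2) (hd : 0 < d) (hde : Even d) (hdd : d ∣ n - 1)
    (hdlt : d < n - 1) :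
    ∃ k : ℕ, Even k ∧ n - 3 < 2 * k ∧ k ≤ n - 2 ∧ Nat.gcd (n - 1) (2 * k + 2) = d :=
  exists_even_k_gcd_eq_of_two_mod_four_general n d h2 hde hdd hdlt
end

section
/- Let n be an odd integer with n > 3 such that n-1 is divisible by 4. Then the set { gcd(n-1, 2k+2) : k an even natural number with n-3 < 2k and k <= n-2 } equals the set { d : d is a positive divisor of n-1 with d congruent to 2 modulo 4 }. -/
/-!
Write `n - 1 = 4m`. For even `k` the number `2k + 2` is `2` modulo `4`, so its gcd with the
multiple `4m` of `2` is even but not divisible by `4`. Conversely a divisor `g ≡ 2 (mod 4)` of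
`n - 1` is `gcd(n - 1, (n - 1) + g)`, and `k = (n - 3 + g) / 2` is an even number with
`2k + 2 = (n - 1) + g` in the required range.
-/

theorem Nat.gcd_mod_four_eq_two {a b : ℕ} (ha : 2 ∣ a) (hb : b % 4 = 2) : Nat.gcd a b % 4 = 2 := by
  have h2 : 2 ∣ Nat.gcd a b := Nat.dvd_gcd ha (by omega)
  have h4 : ¬ 4 ∣ Nat.gcd a b := fun h ↦ by
    have := h.trans (Nat.gcd_dvd_right a b)
    omega
  have hpos : 0 < Nat.gcd a b := Nat.gcd_pos_of_pos_right a (by omega)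
  omega

theorem gcd_set_eq_of_four_dvd_general (n : ℕ) (hn3 : 3 < n) (h4 : 4 ∣ n - 1) :
    {g : ℕ | ∃ k : ℕ, Even k ∧ n - 3 < 2 * k ∧ k ≤ n - 2 ∧
        g = Nat.gcd (n - 1) (2 * k + 2)} =
      {d : ℕ | 0 < d ∧ d ∣ n - 1 ∧ d % 4 = 2} := by
  obtain ⟨m, hm⟩ := h4
  ext g
  constructor
  · rintro ⟨k, ⟨j, rfl⟩, -, -, rfl⟩
    exact ⟨Nat.gcd_pos_of_pos_left _ (by omega), Nat.gcd_dvd_left _ _,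
      Nat.gcd_mod_four_eq_two ⟨2 * m, by omega⟩ (by omega)⟩
  · rintro ⟨hg0, hg, hg4⟩
    have hle : g ≤ n - 1 := Nat.le_of_dvd (by omega) hg
    refine ⟨(n - 3 + g) / 2, Nat.even_iff.mpr (by omega), by omega, by omega, ?_⟩
    rw [show 2 * ((n - 3 + g) / 2) + 2 = (n - 1) + g by omega, Nat.gcd_self_add_right,
      Nat.gcd_eq_right hg]

/-- Let `n` be an odd integer with `n > 3` such that `4 ∣ n - 1`.  Then the set
`{ gcd(n-1, 2k+2) : k even, n - 3 < 2k, k ≤ n - 2 }` equals the set of positive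
divisors of `n - 1` congruent to `2` modulo `4`. -/
theorem gcd_set_eq_of_four_dvd (n : ℕ) (hn3 : 3 < n) (hno : Odd n) (h4 : 4 ∣ n - 1) :
    {g : ℕ | ∃ k : ℕ, Even k ∧ n - 3 < 2 * k ∧ k ≤ n - 2 ∧
        g = Nat.gcd (n - 1) (2 * k + 2)} =
      {d : ℕ | 0 < d ∧ d ∣ n - 1 ∧ d % 4 = 2} :=
  gcd_set_eq_of_four_dvd_general n hn3 h4
end

section
/- Let n be an odd integer with n > 3 such that n-1 is congruent to 2 modulo 4. Then the set { gcd(n-1, 2k+2) : k an even natural number with n-3 < 2k and k <= n-2 } equals the set { d : d is an even positive divisor of n-1 with d < n-1 }. -/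
/-!
Write `n - 1 = 2 m` with `m` odd and `k + 1 = j`, so the gcd is `2 gcd(m, j)` with `j` odd and
`m < j ≤ 2m`. The value `2m` would need `j = 2m`, which is even. Conversely a proper divisor `e`
of the odd number `m` satisfies `3 e ≤ m`, and `j = m + 2e` is an admissible odd value with
`gcd(m, m + 2e) = gcd(m, 2e) = e`.
-/

theorem Odd.three_mul_le_of_dvd_of_lt {m e : ℕ} (hm : Odd m) (he : e ∣ m) (hlt : e < m) :
    3 * e ≤ m := by
  obtain ⟨c, rfl⟩ := he
  have hc : Odd c := (Nat.odd_mul.mp hm).2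
  have hc1 : c ≠ 1 := by rintro rfl; simp at hlt
  have hc3 : 3 ≤ c := by obtain ⟨i, rfl⟩ := hc; omega
  calc 3 * e = e * 3 := mul_comm _ _
    _ ≤ e * c := Nat.mul_le_mul_left e hc3

theorem Odd.gcd_add_two_mul_of_dvd {m e : ℕ} (hm : Odd m) (he : e ∣ m) :
    Nat.gcd m (m + 2 * e) = e := by
  rw [add_comm, Nat.gcd_add_self_right,
    (Nat.coprime_two_left.mpr hm).gcd_mul_left_cancel_right e, Nat.gcd_eq_right he]

theorem Nat.gcd_two_mul_lt_of_even {m k : ℕ} (hk : Even k) (hmk : m ≤ k) (hk2m : k < 2 * m) :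
    Nat.gcd (2 * m) (2 * k + 2) < 2 * m := by
  have hndvd : ¬2 * m ∣ 2 * k + 2 := by
    obtain ⟨i, rfl⟩ := hk
    exact not_dvd_of_lt_of_lt_mul_succ (k := 1) (by omega) (by omega)
  refine lt_of_le_of_ne (le_of_dvd (by omega) (gcd_dvd_left _ _)) fun h => hndvd ?_
  exact h ▸ gcd_dvd_right _ _

theorem Nat.setOf_gcd_two_mul_eq_of_odd {m : ℕ} (hm : Odd m) :
    {g : ℕ | ∃ k : ℕ, Even k ∧ m ≤ k ∧ k < 2 * m ∧ g = Nat.gcd (2 * m) (2 * k + 2)} =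
      {d : ℕ | 0 < d ∧ Even d ∧ d ∣ 2 * m ∧ d < 2 * m} := by
  ext g
  constructor
  · rintro ⟨k, hk, hmk, hk2m, rfl⟩
    exact ⟨gcd_pos_of_pos_left _ (by omega), even_iff_two_dvd.mpr (dvd_gcd (dvd_mul_right 2 m)
      ⟨k + 1, by ring⟩), gcd_dvd_left _ _, gcd_two_mul_lt_of_even hk hmk hk2m⟩
  · rintro ⟨hpos, ⟨e, rfl⟩, hdvd, hlt⟩
    rw [← two_mul] at hdvd hlt ⊢
    have he : e ∣ m := Nat.dvd_of_mul_dvd_mul_left two_pos hdvd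
    have h3e := hm.three_mul_le_of_dvd_of_lt he (by omega)
    refine ⟨m + 2 * e - 1, ?_, by omega, by omega, ?_⟩
    · obtain ⟨i, rfl⟩ := hm
      exact ⟨i + e, by omega⟩
    · rw [show 2 * (m + 2 * e - 1) + 2 = 2 * (m + 2 * e) by omega, gcd_mul_left,
        hm.gcd_add_two_mul_of_dvd he]

theorem gcd_set_eq_of_two_mod_four_general (n : ℕ)
    (h2 : (n - 1) % 4 = 2) :
    {g : ℕ | ∃ k : ℕ, Even k ∧ n - 3 < 2 * k ∧ k ≤ n - 2 ∧
        g = Nat.gcd (n - 1) (2 * k + 2)} =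
      {d : ℕ | 0 < d ∧ Even d ∧ d ∣ n - 1 ∧ d < n - 1} := by
  obtain ⟨m, hn⟩ : ∃ m, n - 1 = 2 * m := ⟨(n - 1) / 2, by omega⟩
  have hm : Odd m := Nat.odd_iff.mpr (by omega)
  rw [hn, ← Nat.setOf_gcd_two_mul_eq_of_odd hm]
  ext g
  constructor <;> rintro ⟨k, hk, hlow, hhigh, rfl⟩ <;> exact ⟨k, hk, by omega, by omega, rfl⟩

/-- Let `n` be an odd integer with `n > 3` such that `n - 1 ≡ 2 (mod 4)`.  Then the set
`{ gcd(n-1, 2k+2) : k even, n - 3 < 2k, k ≤ n - 2 }` equals the set of even positive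
divisors of `n - 1` that are strictly less than `n - 1`. -/
theorem gcd_set_eq_of_two_mod_four (n : ℕ) (hn3 : 3 < n) (hno : Odd n)
    (h2 : (n - 1) % 4 = 2) :
    {g : ℕ | ∃ k : ℕ, Even k ∧ n - 3 < 2 * k ∧ k ≤ n - 2 ∧
        g = Nat.gcd (n - 1) (2 * k + 2)} =
      {d : ℕ | 0 < d ∧ Even d ∧ d ∣ n - 1 ∧ d < n - 1} :=
  gcd_set_eq_of_two_mod_four_general n h2
end

section
/- Let n, p, k be natural numbers with 1 <= p < n, k <= p, and n - p + k > p. Then the set R = { u in R^n : u_1^2 + ... + u_p^2 = p and u_1^2 + ... + u_k^2 + u_{p+1}^2 + ... + u_n^2 = n - p + k }, with the subspace topology from Euclidean space R^n, is homeomorphic to the product S^{p-1} x S^{n-p-1} of the unit sphere in R^p and the unit sphere in R^{n-p}. -/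
/-!
Split `u ∈ ℝⁿ` as `(x, y) ∈ ℝᵖ × ℝⁿ⁻ᵖ`. The two equations say `‖x‖² = p` and
`‖y‖² = c - q(x)`, where `c = n - p + k` and `q(x) = x₁² + ⋯ + x_k² ≤ ‖x‖² = p < c`.
So `R` is a bundle of spheres over the sphere of radius `√p` in `ℝᵖ` whose fibre radius
`√(c - q(x))` is a positive continuous function of `x`; rescaling both factors,
`(x, y) ↦ (x / √p, y / √(c - q(x)))`, trivialises it.
-/

open Metric Finset

section SphereProd

variable {E F : Type*} [NormedAddCommGroup E] [NormedSpace ℝ E]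
  [NormedAddCommGroup F] [NormedSpace ℝ F]

theorem norm_inv_smul_of_norm_eq {x : E} {r : ℝ} (hr : 0 < r) (hx : ‖x‖ = r) :
    ‖r⁻¹ • x‖ = 1 := by
  rw [norm_smul, hx, norm_inv, Real.norm_of_nonneg hr.le, inv_mul_cancel₀ hr.ne']

noncomputable def Homeomorph.sphereProdOfVaryingRadius {r : ℝ} (hr : 0 < r) {ρ : E → ℝ}
    (hρ : Continuous ρ) (hρ_pos : ∀ x, ‖x‖ = r → 0 < ρ x) :
    {z : E × F | ‖z.1‖ = r ∧ ‖z.2‖ = ρ z.1} ≃ₜ sphere (0 : E) 1 × sphere (0 : F) 1 where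
  toFun z := (⟨r⁻¹ • z.1.1, by simpa using norm_inv_smul_of_norm_eq hr z.2.1⟩,
    ⟨(ρ z.1.1)⁻¹ • z.1.2, by simpa using norm_inv_smul_of_norm_eq (hρ_pos _ z.2.1) z.2.2⟩)
  invFun w := ⟨(r • w.1.1, ρ (r • w.1.1) • w.2.1), by
    have h₁ : ‖r • (w.1 : E)‖ = r := by simp [norm_smul, abs_of_pos hr]
    refine ⟨h₁, ?_⟩
    simp [norm_smul, abs_of_pos (hρ_pos _ h₁)]⟩
  left_inv z := by
    obtain ⟨⟨x, y⟩, hx, hy⟩ := z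
    ext <;> simp [smul_smul, hr.ne', (hρ_pos x hx).ne']
  right_inv w := by
    obtain ⟨⟨a, ha⟩, b⟩ := w
    have h₁ : ‖r • a‖ = r := by simp_all [norm_smul, abs_of_pos hr]
    ext <;> simp [smul_smul, hr.ne', (hρ_pos _ h₁).ne']
  continuous_toFun := by
    refine .prodMk (.subtype_mk (by fun_prop) _) (.subtype_mk ?_ _)
    exact ((hρ.comp (by fun_prop)).inv₀ fun z => (hρ_pos _ z.2.1).ne').smul (by fun_prop)
  continuous_invFun := by
    apply Continuous.subtype_mk
    fun_prop

end SphereProd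

def partialNormSq {p : ℕ} (k : ℕ) (x : EuclideanSpace ℝ (Fin p)) : ℝ :=
  ∑ i ∈ univ.filter fun i : Fin p => (i : ℕ) < k, x i ^ 2

section PartialNormSq

variable {p m : ℕ} (k : ℕ)

theorem partialNormSq_le_norm_sq (x : EuclideanSpace ℝ (Fin p)) :
    partialNormSq k x ≤ ‖x‖ ^ 2 := by
  rw [EuclideanSpace.real_norm_sq_eq]
  exact sum_le_sum_of_subset_of_nonneg (filter_subset _ _) fun i _ _ => sq_nonneg _

theorem partialNormSq_lt {c : ℝ} (hc : (p : ℝ) < c) {x : EuclideanSpace ℝ (Fin p)}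
    (hx : ‖x‖ = √p) : partialNormSq k x < c := by
  have hx_sq : ‖x‖ ^ 2 = p := by rw [hx, Real.sq_sqrt (Nat.cast_nonneg _)]
  linarith [partialNormSq_le_norm_sq k x]

theorem continuous_partialNormSq : Continuous (partialNormSq (p := p) k) := by
  unfold partialNormSq
  fun_prop

theorem sum_filter_lt_sq_eq_norm_sq_fst (u : EuclideanSpace ℝ (Fin (p + m))) :
    ∑ i ∈ univ.filter (fun i : Fin (p + m) => (i : ℕ) < p), u i ^ 2 =
      ‖(EuclideanSpace.finAddEquivProd u).1‖ ^ 2 := by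
  simp [EuclideanSpace.real_norm_sq_eq, sum_filter, Fin.sum_univ_add]

theorem sum_filter_lt_or_ge_sq_eq (u : EuclideanSpace ℝ (Fin (p + m))) :
    ∑ i ∈ univ.filter (fun i : Fin (p + m) => (i : ℕ) < k ∨ p ≤ (i : ℕ)), u i ^ 2 =
      partialNormSq k (EuclideanSpace.finAddEquivProd u).1 +
        ‖(EuclideanSpace.finAddEquivProd u).2‖ ^ 2 := by
  simp [EuclideanSpace.real_norm_sq_eq, partialNormSq, sum_filter, Fin.sum_univ_add,
    fun i : Fin p => i.is_lt.not_ge]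

theorem quadric_iff_norm_eq_sqrt {c : ℝ} (hc : (p : ℝ) < c)
    (u : EuclideanSpace ℝ (Fin (p + m))) :
    ((∑ i ∈ univ.filter fun i : Fin (p + m) => (i : ℕ) < p, u i ^ 2) = (p : ℝ) ∧
      (∑ i ∈ univ.filter fun i : Fin (p + m) => (i : ℕ) < k ∨ p ≤ (i : ℕ), u i ^ 2) = c) ↔
      ‖(EuclideanSpace.finAddEquivProd u).1‖ = √p ∧
        ‖(EuclideanSpace.finAddEquivProd u).2‖ =
          √(c - partialNormSq k (EuclideanSpace.finAddEquivProd u).1) := by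
  rw [sum_filter_lt_sq_eq_norm_sq_fst, sum_filter_lt_or_ge_sq_eq]
  constructor
  · rintro ⟨hx, hxy⟩
    rw [← hx, ← hxy, add_sub_cancel_left, Real.sqrt_sq (norm_nonneg _),
      Real.sqrt_sq (norm_nonneg _)]
    exact ⟨rfl, rfl⟩
  · rintro ⟨hx, hy⟩
    refine ⟨by rw [hx, Real.sq_sqrt (Nat.cast_nonneg _)], ?_⟩
    rw [hy, Real.sq_sqrt (sub_nonneg.2 (partialNormSq_lt k hc hx).le)]
    ring

end PartialNormSq

open Finset in
theorem quadric_homeo_sphere_prod_general (n p k : ℕ) (hp : 1 ≤ p) (hpn : p < n)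
    (hnpk : p < n - p + k) :
    Nonempty (
      ({u : EuclideanSpace ℝ (Fin n) |
          (∑ i ∈ univ.filter fun i : Fin n => (i : ℕ) < p, u i ^ 2) = (p : ℝ) ∧
          (∑ i ∈ univ.filter fun i : Fin n => (i : ℕ) < k ∨ p ≤ (i : ℕ), u i ^ 2)
            = ((n : ℝ) - p + k)} : Set (EuclideanSpace ℝ (Fin n))) ≃ₜ
        (Metric.sphere (0 : EuclideanSpace ℝ (Fin p)) 1 ×
          Metric.sphere (0 : EuclideanSpace ℝ (Fin (n - p))) 1)) := by
  obtain ⟨m, rfl⟩ := Nat.exists_eq_add_of_le hpn.le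
  rw [Nat.add_sub_cancel_left] at hnpk ⊢
  set c : ℝ := ((p + m : ℕ) : ℝ) - p + k
  have hc : (p : ℝ) < c := by
    have : (p : ℝ) < m + k := by exact_mod_cast hnpk
    simp only [c, Nat.cast_add]
    linarith
  have hρ_pos : ∀ x : EuclideanSpace ℝ (Fin p), ‖x‖ = √p → 0 < √(c - partialNormSq k x) :=
    fun x hx => Real.sqrt_pos.2 (sub_pos.2 (partialNormSq_lt k hc hx))
  let R : Set (EuclideanSpace ℝ (Fin p) × EuclideanSpace ℝ (Fin m)) :=
    {z | ‖z.1‖ = √p ∧ ‖z.2‖ = √(c - partialNormSq k z.1)}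
  exact ⟨(EuclideanSpace.finAddEquivProd.toHomeomorph.sets (t := R)
      (Set.ext (quadric_iff_norm_eq_sqrt k hc))).trans
    (Homeomorph.sphereProdOfVaryingRadius (Real.sqrt_pos.2 (by exact_mod_cast hp))
      (continuous_const.sub (continuous_partialNormSq k)).sqrt hρ_pos)⟩

open Finset in
/-- Let `1 ≤ p < n`, `k ≤ p` and `n - p + k > p`.  The intersection of quadrics
`{ u ∈ ℝⁿ : u₁² + ⋯ + u_p² = p,  u₁² + ⋯ + u_k² + u_{p+1}² + ⋯ + u_n² = n - p + k }`
is homeomorphic to the product of unit spheres `S^{p-1} × S^{n-p-1}`. -/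
theorem quadric_homeo_sphere_prod (n p k : ℕ) (hp : 1 ≤ p) (hpn : p < n)
    (hk : k ≤ p) (hnpk : p < n - p + k) :
    Nonempty (
      ({u : EuclideanSpace ℝ (Fin n) |
          (∑ i ∈ univ.filter fun i : Fin n => (i : ℕ) < p, u i ^ 2) = (p : ℝ) ∧
          (∑ i ∈ univ.filter fun i : Fin n => (i : ℕ) < k ∨ p ≤ (i : ℕ), u i ^ 2)
            = ((n : ℝ) - p + k)} : Set (EuclideanSpace ℝ (Fin n))) ≃ₜ
        (Metric.sphere (0 : EuclideanSpace ℝ (Fin p)) 1 ×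
          Metric.sphere (0 : EuclideanSpace ℝ (Fin (n - p))) 1)) :=
  quadric_homeo_sphere_prod_general n p k hp hpn hnpk
end

section
/- Let n and k be natural numbers with n > 3, k <= n-2, and 2k + 2 > n - 1. Then the set R = { u in R^n : u_1^2 + ... + u_{n-1}^2 = n - 1 and u_1^2 + ... + u_k^2 + u_n^2 = 2k + 2 }, with the subspace topology from Euclidean space R^n, is homeomorphic to S^{n-2} x {+1, -1}, i.e. to the disjoint union of two copies of the unit sphere in R^{n-1}. -/
/-! Write `u = (y, t) ∈ ℝ^{n-1} × ℝ`. The first equation puts `y` on the sphere of radius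
`√(n-1)`, and the second reads `t² = 2k + 2 - ∑_{i<k} y_i²`. The right-hand side is at least
`2k + 2 - (n - 1) > 0`, so over every point of the sphere lie exactly the two values
`t = ±√(2k + 2 - ∑_{i<k} y_i²)`, depending continuously on `y`; the sign of `t` separates the
two sheets. -/

open Finset Metric

def EuclideanSpace.initLastHomeomorph (𝕜 : Type*) [RCLike 𝕜] (m : ℕ) :
    EuclideanSpace 𝕜 (Fin (m + 1)) ≃ₜ EuclideanSpace 𝕜 (Fin m) × 𝕜 where
  toFun u := (WithLp.toLp 2 (Fin.init u.ofLp), u (Fin.last m))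
  invFun p := WithLp.toLp 2 (Fin.snoc p.1.ofLp p.2)
  left_inv u := by simp
  right_inv p := by simp
  continuous_toFun := by fun_prop
  continuous_invFun := by fun_prop

noncomputable def sqEqSetHomeomorphProdBool {X : Type*} [TopologicalSpace X] (s : Set X)
    (g : X → ℝ) (hg : Continuous g) (hpos : ∀ x ∈ s, 0 < g x) :
    {p : X × ℝ | p.1 ∈ s ∧ p.2 ^ 2 = g p.1} ≃ₜ s × Bool :=
  have ne_zero : ∀ p : {p : X × ℝ | p.1 ∈ s ∧ p.2 ^ 2 = g p.1}, p.1.2 ≠ 0 :=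
    fun p => ne_zero_pow two_ne_zero (p.2.2 ▸ (hpos _ p.2.1).ne')
  { toFun p := (⟨p.1.1, p.2.1⟩, decide (0 < p.1.2))
    invFun q := ⟨(q.1, cond q.2 √(g q.1) (-√(g q.1))), q.1.2, by
      cases q.2 <;> simp [Real.sq_sqrt (hpos _ q.1.2).le]⟩
    left_inv p := by
      obtain ⟨⟨x, t⟩, hx, ht⟩ := p
      ext
      · rfl
      · rcases (ne_zero ⟨(x, t), hx, ht⟩).lt_or_gt with hneg | hpos
        · simp [hneg.not_gt, ← ht, Real.sqrt_sq_eq_abs, abs_of_neg hneg]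
        · simp [hpos, ← ht, Real.sqrt_sq_eq_abs, abs_of_pos hpos]
    right_inv := by
      rintro ⟨x, b⟩
      have := Real.sqrt_pos.2 (hpos x x.2)
      cases b <;> simp [this]
    continuous_toFun := by
      refine (Continuous.subtype_mk (by fun_prop) _).prodMk (continuous_discrete_rng.2 ?_)
      rintro (_ | _)
      · have : (fun p : {p : X × ℝ | p.1 ∈ s ∧ p.2 ^ 2 = g p.1} => decide (0 < p.1.2)) ⁻¹'
            {false} = {p | p.1.2 < 0} := by
          ext p
          simpa using (ne_zero p).le_iff_lt
        exact this ▸ isOpen_lt (by fun_prop) continuous_const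
      · have : (fun p : {p : X × ℝ | p.1 ∈ s ∧ p.2 ^ 2 = g p.1} => decide (0 < p.1.2)) ⁻¹'
            {true} = {p | 0 < p.1.2} := by
          ext p
          simp
        exact this ▸ isOpen_lt continuous_const (by fun_prop)
    continuous_invFun := by
      refine Continuous.subtype_mk (continuous_prod_of_discrete_right.2 fun b => ?_) _
      cases b <;> exact continuous_subtype_val.prodMk (by simp only [cond]; fun_prop) }

noncomputable def sphereHomeomorphUnitSphere {E : Type*} [NormedAddCommGroup E]
    [NormedSpace ℝ E] {r : ℝ} (hr : 0 < r) : sphere (0 : E) r ≃ₜ sphere (0 : E) 1 :=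
  (Homeomorph.smulOfNeZero r⁻¹ (inv_ne_zero hr.ne')).subtype fun x => by
    simp [norm_smul, abs_of_pos hr, inv_mul_eq_one₀ hr.ne', eq_comm]

theorem Fin.sum_filter_lt_last {M : Type*} [AddCommMonoid M] {m : ℕ} (f : Fin (m + 1) → M) :
    ∑ i ∈ univ.filter (fun i : Fin (m + 1) => (i : ℕ) < m), f i = ∑ j : Fin m, f j.castSucc := by
  simp [sum_filter, Fin.sum_univ_castSucc]

theorem Fin.sum_filter_lt_or_eq_last {M : Type*} [AddCommMonoid M] {m : ℕ} (k : ℕ)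
    (f : Fin (m + 1) → M) :
    ∑ i ∈ univ.filter (fun i : Fin (m + 1) => (i : ℕ) < k ∨ (i : ℕ) = m), f i
      = ∑ j ∈ univ.filter (fun j : Fin m => (j : ℕ) < k), f j.castSucc + f (Fin.last m) := by
  simp [sum_filter, Fin.sum_univ_castSucc, Nat.ne_of_lt]

theorem EuclideanSpace.mem_sphere_zero_sqrt_iff {ι : Type*} [Fintype ι] {a : ℝ} (ha : 0 ≤ a)
    (y : EuclideanSpace ℝ ι) : y ∈ sphere (0 : EuclideanSpace ℝ ι) √a ↔ ∑ i, y i ^ 2 = a := by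
  rw [mem_sphere_zero_iff_norm, ← sq_eq_sq₀ (norm_nonneg _) (Real.sqrt_nonneg a), Real.sq_sqrt ha,
    EuclideanSpace.real_norm_sq_eq]

noncomputable def quadricHomeomorphSphereProdBool (m k : ℕ) {a c : ℝ} (ha : 0 < a)
    (hac : a < c) :
    {u : EuclideanSpace ℝ (Fin (m + 1)) |
      ∑ i ∈ univ.filter (fun i : Fin (m + 1) => (i : ℕ) < m), u i ^ 2 = a ∧
      ∑ i ∈ univ.filter (fun i : Fin (m + 1) => (i : ℕ) < k ∨ (i : ℕ) = m), u i ^ 2 = c} ≃ₜ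
      sphere (0 : EuclideanSpace ℝ (Fin m)) 1 × Bool :=
  let g (y : EuclideanSpace ℝ (Fin m)) : ℝ :=
    c - ∑ j ∈ univ.filter (fun j : Fin m => (j : ℕ) < k), y j ^ 2
  ((EuclideanSpace.initLastHomeomorph ℝ m).subtype
      (q := (· ∈ {p : EuclideanSpace ℝ (Fin m) × ℝ | p.1 ∈ sphere 0 √a ∧ p.2 ^ 2 = g p.1}))
      fun u => by
        simp only [Set.mem_ofPred_eq, EuclideanSpace.mem_sphere_zero_sqrt_iff ha.le,
          Fin.sum_filter_lt_last, Fin.sum_filter_lt_or_eq_last]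
        simp [EuclideanSpace.initLastHomeomorph, g, Fin.init, eq_sub_iff_add_eq, add_comm]).trans <|
    (sqEqSetHomeomorphProdBool _ g (by fun_prop) fun y hy => by
      have := sum_le_sum_of_subset_of_nonneg (filter_subset (fun j : Fin m => (j : ℕ) < k) univ)
        fun j _ _ => sq_nonneg (y j)
      rw [(EuclideanSpace.mem_sphere_zero_sqrt_iff ha.le y).1 hy] at this
      linarith).trans <|
    (sphereHomeomorphUnitSphere (Real.sqrt_pos.2 ha)).prodCongr (Homeomorph.refl Bool)

open Finset in
theorem quadric_homeo_sphere_two_copies_general (n k : ℕ) (hn : 3 < n)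
    (hk2 : n - 1 < 2 * k + 2) :
    Nonempty (
      ({u : EuclideanSpace ℝ (Fin n) |
          (∑ i ∈ univ.filter fun i : Fin n => (i : ℕ) < n - 1, u i ^ 2) = (n : ℝ) - 1 ∧
          (∑ i ∈ univ.filter fun i : Fin n => (i : ℕ) < k ∨ (i : ℕ) = n - 1, u i ^ 2)
            = 2 * (k : ℝ) + 2} : Set (EuclideanSpace ℝ (Fin n))) ≃ₜ
        (Metric.sphere (0 : EuclideanSpace ℝ (Fin (n - 1))) 1 × Bool)) := by
  obtain ⟨m, rfl⟩ : ∃ m, n = m + 1 := ⟨n - 1, by omega⟩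
  -- `m + 1 - 1` unfolds to `m` definitionally, the cast `↑(m + 1) - 1` does not: keep it as `a`.
  have hm : ((m + 1 : ℕ) : ℝ) - 1 = m := by push_cast; ring
  have ha : (0 : ℝ) < (m + 1 : ℕ) - 1 := hm ▸ by exact_mod_cast (by omega : 0 < m)
  have hac : ((m + 1 : ℕ) : ℝ) - 1 < 2 * k + 2 :=
    hm ▸ by exact_mod_cast (by omega : m < 2 * k + 2)
  exact ⟨quadricHomeomorphSphereProdBool m k ha hac⟩

open Finset in
/-- Let `n > 3`, `k ≤ n - 2` and `2k + 2 > n - 1`.  The intersection of quadrics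
`{ u ∈ ℝⁿ : u₁² + ⋯ + u_{n-1}² = n - 1,  u₁² + ⋯ + u_k² + u_n² = 2k + 2 }`
is homeomorphic to `S^{n-2} × {+1, -1}`, i.e. to the disjoint union of two copies of
the unit sphere in `ℝ^{n-1}`. -/
theorem quadric_homeo_sphere_two_copies (n k : ℕ) (hn : 3 < n) (hk : k ≤ n - 2)
    (hk2 : n - 1 < 2 * k + 2) :
    Nonempty (
      ({u : EuclideanSpace ℝ (Fin n) |
          (∑ i ∈ univ.filter fun i : Fin n => (i : ℕ) < n - 1, u i ^ 2) = (n : ℝ) - 1 ∧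
          (∑ i ∈ univ.filter fun i : Fin n => (i : ℕ) < k ∨ (i : ℕ) = n - 1, u i ^ 2)
            = 2 * (k : ℝ) + 2} : Set (EuclideanSpace ℝ (Fin n))) ≃ₜ
        (Metric.sphere (0 : EuclideanSpace ℝ (Fin (n - 1))) 1 × Bool)) :=
  quadric_homeo_sphere_two_copies_general n k hn hk2
end
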